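/- The set of interval-closed sets of [m] × [n] is in bijection with the set of bicolored Motzkin paths M of length m + n (paths from (0,0) to (m+n,0) with steps u=(1,1), d=(1,−1), and two colors of horizontal steps h₁, h₂, never going below the x-axis) satisfying: the number of u steps plus h₁ steps equals m, the number of d steps plus h₂ steps equals n, and no h₂ step at height 0 is immediately followed by an h₁ step. -/

import Mathlib

/-- A subset `I` of a poset is interval-closed if for all `x, y ∈ I` and `z`
with `x < z < y`, we have `z ∈ I`. -/
def IsIntervalClosed {P : Type*} [PartialOrder P] (I : Finset P) : Prop :=
  ∀ x ∈ I, ∀ y ∈ I, ∀ z : P, x < z → z < y → z ∈ I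

/-- Steps of a bicolored Motzkin path: up, down, and two colors of horizontal steps. -/
inductive BMStep : Type
  | u : BMStep
  | d : BMStep
  | h1 : BMStep
  | h2 : BMStep
  deriving DecidableEq

/-- Vertical displacement of a step. -/
def BMStep.wt : BMStep → ℤ
  | .u => 1
  | .d => -1
  | _ => 0

/-- Height of the path `M` after its first `k` steps. -/
def hgt (M : List BMStep) (k : ℕ) : ℤ := ((M.take k).map BMStep.wt).sum

/-- `M` is a bicolored Motzkin path: it never goes below the x-axis and ends at height 0. -/
def IsBMPath (M : List BMStep) : Prop :=
  (∀ k : ℕ, 0 ≤ hgt M k) ∧ hgt M M.length = 0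

/-- No `h₂` step at height 0 (on the x-axis) is immediately followed by an `h₁` step. -/
def NoH2ThenH1 (M : List BMStep) : Prop :=
  ∀ k : ℕ, ¬ (hgt M k = 0 ∧ M[k]? = some BMStep.h2 ∧ M[k + 1]? = some BMStep.h1)

/-!
Read the steps `u, d, h₁, h₂` as pairs (north, east), (east, north), (east, east),
(north, north) of steps of an upper and a lower lattice path from `(0, 0)` to `(m, n)`; the
height of the Motzkin path is the difference of their numbers of north steps, so it stays
nonnegative exactly when the paths do not cross. A pair of noncrossing paths is recorded by the
heights `α r ≥ β r` of their `r`-th east steps, and the cells of column `m - 1 - r` lying between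
the paths form the interval `[β r, α r)`. Every interval-closed set arises this way, since its
columns are intervals whose ends move monotonically, and it determines the pair once we demand
that an empty column does not raise the upper path. That demand is the condition that no `h₂`
at height `0` is followed by an `h₁`.

Passing between paths and east-step heights is the Galois connection between `Nat.count` and
`Nat.nth` for the set of east steps.
-/

namespace Nat

variable {p q : ℕ → Prop} [DecidablePred p] [DecidablePred q]

theorem count_add_count_not (t : ℕ) : count p t + count (fun k => ¬ p k) t = t := by
  induction t with
  | zero => simp
  | succ t ih =>
    rw [count_succ, count_succ]
    by_cases h : p t <;> simp only [h, not_true_eq_false, not_false_eq_true, if_true, if_false] <;>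
      omega

theorem count_le_count_iff_nth_le (hp : {k | p k}.Infinite) (hq : {k | q k}.Infinite) :
    (∀ t, count p t ≤ count q t) ↔ ∀ r, nth q r ≤ nth p r := by
  refine ⟨fun h r => ?_, fun h t => ?_⟩
  · have := count_nth_succ_of_infinite hp r ▸ h (nth p r + 1)
    exact Nat.lt_succ_iff.1 (nth_lt_of_lt_count this)
  · by_contra! hlt
    exact ((lt_nth_iff_count_lt hq).2 ((h _).trans_lt (nth_lt_of_lt_count hlt))).false

theorem nth_sub_one_eq_of_pred (hp : {k | p k}.Infinite) {r : ℕ} (h0 : 0 < nth p r)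
    (h : p (nth p r - 1)) : 0 < r ∧ nth p (r - 1) = nth p r - 1 := by
  have hlt : count p (nth p r - 1) < r := by
    simpa [count_nth_of_infinite hp] using count_strict_mono h (by omega : nth p r - 1 < nth p r)
  have hmono := nth_strictMono hp
  have := nth_count h
  have h1 : nth p (count p (nth p r - 1)) ≤ nth p (r - 1) := hmono.monotone (by omega)
  have h2 : nth p (r - 1) < nth p r := hmono (by omega)
  omega

end Nat

open Nat

section LatticeWord

variable {p q : ℕ → Prop} {m n : ℕ}

/-- A lattice word is a predicate `p` on step positions, `p k` meaning that step `k` goes north;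
`eastHeight p r` is the height of its east step number `r` (counting from `0`). -/
noncomputable def eastHeight (p : ℕ → Prop) (r : ℕ) : ℕ := nth (fun k => ¬ p k) r - r

def wordOfHeights (α : ℕ → ℕ) (k : ℕ) : Prop := k ∉ Set.range fun r => α r + r

lemma infinite_setOf_not_of_forall_ge {L : ℕ} (h : ∀ k, L ≤ k → ¬ p k) :
    {k | ¬ p k}.Infinite :=
  Set.infinite_of_forall_exists_gt fun a => ⟨a + L + 1, h _ (by omega), by omega⟩

lemma eastHeight_add (hp : {k | ¬ p k}.Infinite) (r : ℕ) :
    eastHeight p r + r = nth (fun k => ¬ p k) r :=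
  Nat.sub_add_cancel (nth_strictMono hp).le_apply

lemma count_nth_not [DecidablePred p] (hp : {k | ¬ p k}.Infinite) (r : ℕ) :
    count p (nth (fun k => ¬ p k) r) = eastHeight p r := by
  have := count_add_count_not (p := p) (nth (fun k => ¬ p k) r)
  rw [count_nth_of_infinite hp] at this
  have := eastHeight_add hp r
  omega

lemma monotone_eastHeight (hp : {k | ¬ p k}.Infinite) : Monotone (eastHeight p) := by
  refine monotone_nat_of_le_succ fun r => ?_
  have := nth_strictMono hp (lt_add_one r)
  have := eastHeight_add hp r
  have := eastHeight_add hp (r + 1)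
  omega

lemma setOf_not_wordOfHeights (α : ℕ → ℕ) :
    {k | ¬ wordOfHeights α k} = Set.range fun r => α r + r := by
  ext k
  simp [wordOfHeights]

lemma eastHeight_wordOfHeights {α : ℕ → ℕ} (hα : Monotone α) :
    eastHeight (wordOfHeights α) = α := by
  have hf : StrictMono fun r => α r + r := hα.add_strictMono strictMono_id
  have hinf : {k | ¬ wordOfHeights α k}.Infinite := by
    rw [setOf_not_wordOfHeights]
    exact Set.infinite_range_of_injective hf.injective
  funext r
  have := nth_comp_of_strictMono hf (fun k hk => by rwa [← setOf_not_wordOfHeights])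
    (fun hfin => absurd hfin hinf) (n := r)
  have hall : (fun i => ¬ wordOfHeights α (α i + i)) = fun _ => True := by
    funext i
    simp [wordOfHeights]
  rw [hall, nth_of_forall fun _ _ => trivial] at this
  rw [eastHeight, ← this, Nat.add_sub_cancel]

lemma wordOfHeights_eastHeight (hp : {k | ¬ p k}.Infinite) :
    wordOfHeights (eastHeight p) = p := by
  have : (Set.range fun r => eastHeight p r + r) = {k | ¬ p k} := by
    simp only [eastHeight_add hp]
    exact range_nth_of_infinite hp
  funext k
  simp [wordOfHeights, this]

lemma wordOfHeights_lt {α : ℕ → ℕ} (hα : ∀ r, m ≤ r → α r = n) {k : ℕ}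
    (hk : wordOfHeights α k) : k < m + n := by
  by_contra! hk'
  exact hk ⟨k - n, show α (k - n) + (k - n) = k by rw [hα _ (by omega)]; omega⟩

variable [DecidablePred p] [DecidablePred q]

lemma count_le_count_iff_eastHeight_le (hp : {k | ¬ p k}.Infinite) (hq : {k | ¬ q k}.Infinite) :
    (∀ t, count q t ≤ count p t) ↔ ∀ r, eastHeight q r ≤ eastHeight p r := by
  have hcount (t : ℕ) :
      count q t ≤ count p t ↔ count (fun k => ¬ p k) t ≤ count (fun k => ¬ q k) t := by
    have := count_add_count_not (p := p) t
    have := count_add_count_not (p := q) t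
    omega
  simp only [hcount, count_le_count_iff_nth_le hp hq]
  refine forall_congr' fun r => ?_
  have := eastHeight_add hp r
  have := eastHeight_add hq r
  omega

lemma eastHeight_eq_of_count_eq (hL : ∀ k, m + n ≤ k → ¬ p k) (hc : count p (m + n) = n)
    {r : ℕ} (hr : m ≤ r) : eastHeight p r = n := by
  have hnot : count (fun k => ¬ p k) (r + n) = r := by
    rw [show r + n = m + n + (r - m) by omega, count_add,
      (count_iff_forall (p := fun k => ¬ p (m + n + k))).2 fun k _ => hL _ (by omega)]
    have := count_add_count_not (p := p) (m + n)
    omega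
  have := nth_count (p := fun k => ¬ p k) (hL (r + n) (by omega))
  rw [hnot] at this
  simp [eastHeight, this]

lemma count_eq_of_eastHeight_eq (hp : {k | ¬ p k}.Infinite) (h : eastHeight p m = n) :
    count p (m + n) = n := by
  have := count_nth_not hp m
  rwa [← eastHeight_add hp m, h, add_comm] at this

lemma eastHeight_flat_of_no_h2_h1 (hp : {k | ¬ p k}.Infinite) (hq : {k | ¬ q k}.Infinite)
    (hle : ∀ r, eastHeight q r ≤ eastHeight p r) (hm : eastHeight p m = n)
    (hno : ∀ k, k + 1 < m + n → count p k = count q k → p k → q k → p (k + 1) ∨ q (k + 1))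
    {r : ℕ} (hr : r < m) (heq : eastHeight q r = eastHeight p r) :
    eastHeight p r = 0 ∨ (0 < r ∧ eastHeight p (r - 1) = eastHeight p r) := by
  -- Otherwise both paths go north just before their shared east step `r`, at equal heights:
  -- an `h₂` at height `0` followed by an `h₁`.
  by_contra! h
  have hpr := eastHeight_add hp r
  have hqr := eastHeight_add hq r
  have hbound : eastHeight p r ≤ n := hm ▸ monotone_eastHeight hp hr.le
  have hprev := eastHeight_add hp (r - 1)
  have hprev' := eastHeight_add hq (r - 1)
  have hmono : eastHeight p (r - 1) ≤ eastHeight p r := monotone_eastHeight hp (Nat.sub_le r 1)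
  have hle' : eastHeight q (r - 1) ≤ eastHeight p (r - 1) := hle (r - 1)
  obtain ⟨s, hs_def⟩ : ∃ s, nth (fun k => ¬ p k) r = s := ⟨_, rfl⟩
  have hqs : nth (fun k => ¬ q k) r = s := by omega
  have hps : p (s - 1) := by
    by_contra hnp
    obtain ⟨h0, hnth⟩ := nth_sub_one_eq_of_pred (r := r) hp (by omega) (by rwa [hs_def])
    exact h.2 h0 (by omega)
  have hqs' : q (s - 1) := by
    by_contra hnq
    obtain ⟨h0, hnth⟩ := nth_sub_one_eq_of_pred (r := r) hq (by omega) (by rwa [hqs])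
    exact h.2 h0 (by omega)
  have hs : s - 1 + 1 = s := by omega
  have hcp := count_nth_not hp r
  have hcq := count_nth_not hq r
  rw [hs_def] at hcp
  rw [hqs] at hcq
  have hcp' := count_succ (p := p) (s - 1)
  have hcq' := count_succ (p := q) (s - 1)
  rw [hs, if_pos hps] at hcp'
  rw [hs, if_pos hqs'] at hcq'
  rcases hno (s - 1) (by omega) (by omega) hps hqs' with h' | h' <;> rw [hs] at h'
  · exact (hs_def ▸ nth_mem_of_infinite hp r) h'
  · exact (hqs ▸ nth_mem_of_infinite hq r) h'

lemma no_h2_h1_of_eastHeight_flat (hp : {k | ¬ p k}.Infinite) (hq : {k | ¬ q k}.Infinite)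
    (hm : ∀ r, m ≤ r → eastHeight p r = n)
    (hflat : ∀ r < m, eastHeight q r = eastHeight p r →
      eastHeight p r = 0 ∨ (0 < r ∧ eastHeight p (r - 1) = eastHeight p r))
    {k : ℕ} (hk : k + 1 < m + n) (hc : count p k = count q k) (hpk : p k) (hqk : q k) :
    p (k + 1) ∨ q (k + 1) := by
  by_contra! h
  have hcp := count_add_count_not (p := p) k
  have hcq := count_add_count_not (p := q) k
  set r := count (fun j => ¬ p j) k
  have hnp : nth (fun j => ¬ p j) r = k + 1 := by
    have := nth_count (p := fun j => ¬ p j) h.1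
    rwa [count_succ, if_neg (not_not.2 hpk), add_zero] at this
  have hnq : nth (fun j => ¬ q j) r = k + 1 := by
    have := nth_count (p := fun j => ¬ q j) h.2
    rwa [count_succ, if_neg (not_not.2 hqk), add_zero,
      show count (fun j => ¬ q j) k = r by omega] at this
  have hpr := eastHeight_add hp r
  have hqr := eastHeight_add hq r
  have hr : r < m := by
    by_contra! hr
    have := hm r hr
    omega
  have hrk : r ≤ k := count_le _
  rcases hflat r hr (by omega) with h0 | ⟨h0, hprev⟩
  · omega
  · have := eastHeight_add hp (r - 1)
    have hnth : nth (fun j => ¬ p j) (r - 1) = k := by omega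
    exact (hnth ▸ nth_mem_of_infinite hp (r - 1)) hpk

end LatticeWord

/-- `α` and `β` are the heights of the east steps of an upper and a lower lattice path to
`(m, n)`, continued eastwards. `upper_flat` says that where the two paths share an east step,
the upper path has not risen since its previous east step (or since the start). -/
structure IsBoundaryPair (m n : ℕ) (α β : ℕ → ℕ) : Prop where
  monotone_upper : Monotone α
  monotone_lower : Monotone β
  lower_le_upper : ∀ r, β r ≤ α r
  upper_eq : ∀ r, m ≤ r → α r = n
  lower_eq : ∀ r, m ≤ r → β r = n
  upper_flat : ∀ r < m, β r = α r → α r = 0 ∨ (0 < r ∧ α (r - 1) = α r)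

lemma IsBoundaryPair.upper_le {m n : ℕ} {α β : ℕ → ℕ} (h : IsBoundaryPair m n α β) (r : ℕ) :
    α r ≤ n := by
  rcases le_total m r with hr | hr
  · exact (h.upper_eq r hr).le
  · exact h.upper_eq m le_rfl ▸ h.monotone_upper hr

/-- The hypotheses on a Motzkin path, read on the north-step words `p`, `q` of its upper and
lower lattice paths (see `isBMPath_and_count_iff`). -/
structure IsAdmissibleWordPair (m n : ℕ) (p q : ℕ → Prop) [DecidablePred p] [DecidablePred q] :
    Prop where
  count_upper : count p (m + n) = n
  count_lower : count q (m + n) = n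
  lower_le_upper : ∀ t, count q t ≤ count p t
  no_h2_h1 : ∀ k, k + 1 < m + n → count p k = count q k → p k → q k → p (k + 1) ∨ q (k + 1)

lemma isAdmissibleWordPair_iff {m n : ℕ} {p q : ℕ → Prop} [DecidablePred p] [DecidablePred q]
    (hp : ∀ k, m + n ≤ k → ¬ p k) (hq : ∀ k, m + n ≤ k → ¬ q k) :
    IsAdmissibleWordPair m n p q ↔ IsBoundaryPair m n (eastHeight p) (eastHeight q) := by
  have hp' := infinite_setOf_not_of_forall_ge hp
  have hq' := infinite_setOf_not_of_forall_ge hq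
  refine ⟨fun h => ?_, fun h => ?_⟩
  · have hupper (r : ℕ) (hr : m ≤ r) := eastHeight_eq_of_count_eq hp h.count_upper hr
    have hle := (count_le_count_iff_eastHeight_le hp' hq').1 h.lower_le_upper
    exact ⟨monotone_eastHeight hp', monotone_eastHeight hq', hle, hupper,
      fun r hr => eastHeight_eq_of_count_eq hq h.count_lower hr,
      fun r hr => eastHeight_flat_of_no_h2_h1 hp' hq' hle (hupper m le_rfl) h.no_h2_h1 hr⟩
  · exact ⟨count_eq_of_eastHeight_eq hp' (h.upper_eq m le_rfl),
      count_eq_of_eastHeight_eq hq' (h.lower_eq m le_rfl),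
      (count_le_count_iff_eastHeight_le hp' hq').2 h.lower_le_upper,
      fun k hk => no_h2_h1_of_eastHeight_flat hp' hq' h.upper_eq h.upper_flat hk⟩

namespace BMStep

def upperNorth : BMStep → Bool
  | u | h2 => true
  | d | h1 => false

def lowerNorth : BMStep → Bool
  | d | h2 => true
  | u | h1 => false

def ofNorth : Bool → Bool → BMStep
  | true, false => u
  | false, true => d
  | false, false => h1
  | true, true => h2

@[simp] lemma upperNorth_ofNorth (a b : Bool) : (ofNorth a b).upperNorth = a := by
  cases a <;> cases b <;> rfl

@[simp] lemma lowerNorth_ofNorth (a b : Bool) : (ofNorth a b).lowerNorth = b := by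
  cases a <;> cases b <;> rfl

@[simp] lemma ofNorth_upperNorth_lowerNorth (s : BMStep) :
    ofNorth s.upperNorth s.lowerNorth = s := by
  cases s <;> rfl

lemma sum_map_wt (l : List BMStep) :
    (l.map wt).sum = (l.countP upperNorth : ℤ) - l.countP lowerNorth := by
  induction l with
  | nil => rfl
  | cons s l ih =>
    cases s <;> simp only [List.map_cons, List.sum_cons, List.countP_cons, ih, wt, upperNorth,
      lowerNorth, if_true, Bool.false_eq_true, if_false] <;> push_cast <;> ring

lemma countP_lowerNorth (l : List BMStep) : l.countP lowerNorth = l.count d + l.count h2 := by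
  induction l with
  | nil => rfl
  | cons s l ih =>
    cases s <;> simp only [List.countP_cons, List.count_cons, ih, lowerNorth, if_true, if_false,
      Bool.false_eq_true, beq_self_eq_true, reduceCtorEq, beq_iff_eq] <;> omega

lemma length_eq_count (l : List BMStep) :
    l.length = l.count d + l.count h2 + (l.count u + l.count h1) := by
  induction l with
  | nil => rfl
  | cons s l ih =>
    cases s <;> simp only [List.length_cons, List.count_cons, ih, beq_self_eq_true, beq_iff_eq,
      reduceCtorEq, if_true, if_false] <;> omega

end BMStep

open BMStep

section Path

def northAt (f : BMStep → Bool) (M : List BMStep) (k : ℕ) : Prop := M[k]?.any f = true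

instance (f : BMStep → Bool) (M : List BMStep) : DecidablePred (northAt f M) :=
  fun _ => inferInstanceAs (Decidable (_ = true))

variable {m n : ℕ} {p q : ℕ → Prop}

lemma count_northAt (f : BMStep → Bool) (M : List BMStep) (t : ℕ) :
    count (northAt f M) t = (M.take t).countP f := by
  induction t with
  | zero => simp
  | succ t ih =>
    rw [count_succ, ih, List.take_add_one, List.countP_append]
    cases h : M[t]? <;> simp [northAt, h]

lemma hgt_eq_count (M : List BMStep) (t : ℕ) :
    hgt M t = (count (northAt upperNorth M) t : ℤ) - count (northAt lowerNorth M) t := by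
  rw [hgt, sum_map_wt, count_northAt, count_northAt]

lemma not_northAt_of_length_le {f : BMStep → Bool} {M : List BMStep} {k : ℕ}
    (hk : M.length ≤ k) : ¬ northAt f M k := by
  simp [northAt, List.getElem?_eq_none hk]

lemma getElem?_eq_some_iff_northAt {M : List BMStep} {k : ℕ} {s : BMStep} :
    M[k]? = some s ↔ k < M.length ∧ (northAt upperNorth M k ↔ s.upperNorth) ∧
      (northAt lowerNorth M k ↔ s.lowerNorth) := by
  rcases lt_or_ge k M.length with hk | hk
  · simp only [northAt, List.getElem?_eq_getElem hk, Option.any_some, Option.some.injEq, hk,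
      true_and]
    refine ⟨by rintro rfl; simp, fun ⟨hu, hl⟩ => ?_⟩
    rw [← ofNorth_upperNorth_lowerNorth M[k], ← ofNorth_upperNorth_lowerNorth s,
      Bool.eq_iff_iff.2 hu, Bool.eq_iff_iff.2 hl]
  · simp [hk.not_gt]

lemma noH2ThenH1_iff (M : List BMStep) :
    NoH2ThenH1 M ↔ ∀ k, k + 1 < M.length →
      count (northAt upperNorth M) k = count (northAt lowerNorth M) k →
      northAt upperNorth M k → northAt lowerNorth M k →
      northAt upperNorth M (k + 1) ∨ northAt lowerNorth M (k + 1) := by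
  simp only [NoH2ThenH1, hgt_eq_count, getElem?_eq_some_iff_northAt, upperNorth, lowerNorth]
  refine forall_congr' fun k => ⟨fun h hk hc hu hl => ?_, ?_⟩
  · by_contra! hne
    exact h ⟨by omega, ⟨by omega, by simp [hu], by simp [hl]⟩,
      ⟨hk, by simp [hne.1], by simp [hne.2]⟩⟩
  · rintro h ⟨hc, ⟨-, hu, hl⟩, ⟨hk, hu', hl'⟩⟩
    rcases h hk (by omega) (by simpa using hu) (by simpa using hl) with h' | h'
    · simpa using hu'.1 h'
    · simpa using hl'.1 h'

lemma isBMPath_and_count_iff (M : List BMStep) :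
    (IsBMPath M ∧ NoH2ThenH1 M ∧ M.count u + M.count h1 = m ∧ M.count d + M.count h2 = n) ↔
      M.length = m + n ∧
        IsAdmissibleWordPair m n (northAt upperNorth M) (northAt lowerNorth M) := by
  have hlower : count (northAt lowerNorth M) M.length = M.count d + M.count h2 := by
    rw [count_northAt, List.take_length, countP_lowerNorth]
  have hlen := length_eq_count M
  simp only [IsBMPath, hgt_eq_count, noH2ThenH1_iff]
  constructor
  · rintro ⟨⟨hnonneg, hend⟩, hno, hm, hn⟩
    have hL : M.length = m + n := by omega
    rw [hL] at hlower hend hno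
    exact ⟨hL, by omega, by omega, fun t => by have := hnonneg t; omega, hno⟩
  · rintro ⟨hL, ⟨hupper, hlower', hle, hno⟩⟩
    rw [← hL] at hupper hlower' hno
    exact ⟨⟨fun t => by have := hle t; omega, by omega⟩, hno, by omega, by omega⟩

open Classical in
noncomputable def ofWords (L : ℕ) (p q : ℕ → Prop) : List BMStep :=
  List.ofFn fun k : Fin L => ofNorth (p k) (q k)

lemma length_ofWords {L : ℕ} : (ofWords L p q).length = L := List.length_ofFn

lemma ofWords_northAt (M : List BMStep) :
    ofWords M.length (northAt upperNorth M) (northAt lowerNorth M) = M := by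
  refine List.ext_getElem length_ofWords fun k _ _ => ?_
  simp [ofWords, northAt]

lemma northAt_upperNorth_ofWords {L : ℕ} (hp : ∀ k, p k → k < L) :
    northAt upperNorth (ofWords L p q) = p := by
  funext k
  by_cases hk : k < L
  · simp [northAt, ofWords, hk]
  · simpa [northAt, ofWords, hk] using fun h => hk (hp k h)

lemma northAt_lowerNorth_ofWords {L : ℕ} (hq : ∀ k, q k → k < L) :
    northAt lowerNorth (ofWords L p q) = q := by
  funext k
  by_cases hk : k < L
  · simp [northAt, ofWords, hk]
  · simpa [northAt, ofWords, hk] using fun h => hk (hq k h)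

section
variable {α β : ℕ → ℕ} (h : IsBoundaryPair m n α β)
include h

lemma eastHeight_upper_ofWords :
    eastHeight (northAt upperNorth (ofWords (m + n) (wordOfHeights α) (wordOfHeights β))) = α := by
  rw [northAt_upperNorth_ofWords fun k => wordOfHeights_lt h.upper_eq,
    eastHeight_wordOfHeights h.monotone_upper]

lemma eastHeight_lower_ofWords :
    eastHeight (northAt lowerNorth (ofWords (m + n) (wordOfHeights α) (wordOfHeights β))) = β := by
  rw [northAt_lowerNorth_ofWords fun k => wordOfHeights_lt h.lower_eq,
    eastHeight_wordOfHeights h.monotone_lower]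

end

noncomputable def bmPathEquivBoundaryPair (m n : ℕ) :
    {M : List BMStep // IsBMPath M ∧ NoH2ThenH1 M ∧
      M.count BMStep.u + M.count BMStep.h1 = m ∧ M.count BMStep.d + M.count BMStep.h2 = n} ≃
    {αβ : (ℕ → ℕ) × (ℕ → ℕ) // IsBoundaryPair m n αβ.1 αβ.2} where
  toFun M := ⟨(eastHeight (northAt upperNorth M.1), eastHeight (northAt lowerNorth M.1)), by
    obtain ⟨hlen, hw⟩ := (isBMPath_and_count_iff M.1).1 M.2
    exact (isAdmissibleWordPair_iff (fun k hk => not_northAt_of_length_le (hlen ▸ hk))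
      (fun k hk => not_northAt_of_length_le (hlen ▸ hk))).1 hw⟩
  invFun αβ := ⟨ofWords (m + n) (wordOfHeights αβ.1.1) (wordOfHeights αβ.1.2), by
    refine (isBMPath_and_count_iff _).2 ⟨length_ofWords, (isAdmissibleWordPair_iff
      (fun k hk => not_northAt_of_length_le (length_ofWords.trans_le hk))
      (fun k hk => not_northAt_of_length_le (length_ofWords.trans_le hk))).2 ?_⟩
    rw [eastHeight_upper_ofWords αβ.2, eastHeight_lower_ofWords αβ.2]
    exact αβ.2⟩
  left_inv := by
    rintro ⟨M, hM⟩
    obtain ⟨hlen, -⟩ := (isBMPath_and_count_iff M).1 hM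
    have hinf {f : BMStep → Bool} : {k | ¬ northAt f M k}.Infinite :=
      infinite_setOf_not_of_forall_ge fun k hk => not_northAt_of_length_le (hlen ▸ hk)
    refine Subtype.ext ?_
    dsimp only
    rw [wordOfHeights_eastHeight hinf, wordOfHeights_eastHeight hinf, ← hlen, ofWords_northAt]
  right_inv αβ :=
    Subtype.ext (Prod.ext (eastHeight_upper_ofWords αβ.2) (eastHeight_lower_ofWords αβ.2))

end Path

section IntervalClosed

variable {m n : ℕ}

lemma IsIntervalClosed.mem_of_le_of_le {P : Type*} [PartialOrder P] {I : Finset P}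
    (hI : IsIntervalClosed I) {x y z : P} (hx : x ∈ I) (hy : y ∈ I) (hxz : x ≤ z) (hzy : z ≤ y) :
    z ∈ I := by
  rcases hxz.eq_or_lt with rfl | hxz
  · exact hx
  rcases hzy.eq_or_lt with rfl | hzy
  · exact hy
  exact hI x hx y hy z hxz hzy

/-- The paths cross the columns from right to left: column `i` is crossed by the east steps
number `m - 1 - i`. -/
def cellsBetween (m n : ℕ) (α β : ℕ → ℕ) : Finset (Fin m × Fin n) :=
  Finset.univ.filter fun x => β x.1.rev ≤ x.2 ∧ (x.2 : ℕ) < α x.1.rev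

section CellsBetween

variable {α β : ℕ → ℕ}

@[simp] lemma mem_cellsBetween {x : Fin m × Fin n} :
    x ∈ cellsBetween m n α β ↔ β x.1.rev ≤ x.2 ∧ (x.2 : ℕ) < α x.1.rev := by
  simp [cellsBetween]

lemma mk_mem_cellsBetween {r j : ℕ} (hr : r < m) (hj : j < n) :
    (Fin.rev ⟨r, hr⟩, (⟨j, hj⟩ : Fin n)) ∈ cellsBetween m n α β ↔ β r ≤ j ∧ j < α r := by
  simp

lemma isIntervalClosed_cellsBetween (hα : Monotone α) (hβ : Monotone β) :
    IsIntervalClosed (cellsBetween m n α β) := by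
  intro x hx y hy z hxz hzy
  simp only [mem_cellsBetween] at *
  have hxz1 : (z.1.rev : ℕ) ≤ x.1.rev := Fin.rev_le_rev.2 hxz.le.1
  have hzy1 : (y.1.rev : ℕ) ≤ z.1.rev := Fin.rev_le_rev.2 hzy.le.1
  have hxz2 : (x.2 : ℕ) ≤ z.2 := hxz.le.2
  have hzy2 : (z.2 : ℕ) ≤ y.2 := hzy.le.2
  exact ⟨(hβ hxz1).trans (hx.1.trans hxz2), hzy2.trans_lt (hy.2.trans_le (hα hzy1))⟩

end CellsBetween

def upperBoundary (I : Finset (Fin m × Fin n)) (r : ℕ) : ℕ :=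
  if r < m then I.sup fun x => if (x.1.rev : ℕ) ≤ r then (x.2 : ℕ) + 1 else 0 else n

/-- The bottom of column `m - 1 - r`, or `upperBoundary I r` when that column is empty
(which also keeps the `sInf` away from the empty set). -/
noncomputable def lowerBoundary (I : Finset (Fin m × Fin n)) (r : ℕ) : ℕ :=
  sInf {j | j = upperBoundary I r ∨ ∃ x ∈ I, (x.1.rev : ℕ) = r ∧ (x.2 : ℕ) = j}

section Boundary

variable {I : Finset (Fin m × Fin n)} {r : ℕ}

lemma upperBoundary_le : upperBoundary I r ≤ n := by
  unfold upperBoundary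
  split_ifs
  · exact Finset.sup_le fun x _ => by split_ifs <;> omega
  · exact le_rfl

lemma lt_upperBoundary_of_mem {x : Fin m × Fin n} (hx : x ∈ I) (hr : (x.1.rev : ℕ) ≤ r) :
    (x.2 : ℕ) < upperBoundary I r := by
  unfold upperBoundary
  split_ifs
  · have := Finset.le_sup
      (f := fun x : Fin m × Fin n => if (x.1.rev : ℕ) ≤ r then (x.2 : ℕ) + 1 else 0) hx
    rw [if_pos hr] at this
    omega
  · exact x.2.isLt

lemma exists_mem_of_lt_upperBoundary {j : ℕ} (hr : r < m) (h : j < upperBoundary I r) :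
    ∃ x ∈ I, (x.1.rev : ℕ) ≤ r ∧ j ≤ x.2 := by
  rw [upperBoundary, if_pos hr, Finset.lt_sup_iff] at h
  obtain ⟨x, hx, hj⟩ := h
  split_ifs at hj with hxr
  · exact ⟨x, hx, hxr, by omega⟩
  · omega

lemma monotone_upperBoundary : Monotone (upperBoundary I) := by
  intro r r' hrr'
  by_cases hr' : r' < m
  · simp only [upperBoundary, if_pos hr', if_pos (hrr'.trans_lt hr')]
    exact Finset.sup_mono_fun fun x _ => by split_ifs <;> omega
  · simpa [upperBoundary, hr'] using upperBoundary_le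

lemma lowerBoundary_le_upperBoundary : lowerBoundary I r ≤ upperBoundary I r :=
  Nat.sInf_le (Or.inl rfl)

lemma lowerBoundary_le_of_mem {x : Fin m × Fin n} (hx : x ∈ I) :
    lowerBoundary I x.1.rev ≤ x.2 :=
  Nat.sInf_le (Or.inr ⟨x, hx, rfl, rfl⟩)

lemma exists_mem_of_lowerBoundary_lt (h : lowerBoundary I r < upperBoundary I r) :
    ∃ x ∈ I, (x.1.rev : ℕ) = r ∧ (x.2 : ℕ) = lowerBoundary I r := by
  rcases Nat.sInf_mem (s := {j | j = upperBoundary I r ∨ ∃ x ∈ I, (x.1.rev : ℕ) = r ∧ (x.2 : ℕ) = j})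
    ⟨_, Or.inl rfl⟩ with h' | h'
  · exact absurd h' h.ne
  · exact h'

lemma lowerBoundary_eq_upperBoundary (h : ∀ x ∈ I, (x.1.rev : ℕ) ≠ r) :
    lowerBoundary I r = upperBoundary I r := by
  refine lowerBoundary_le_upperBoundary.antisymm (not_lt.1 fun hlt => ?_)
  obtain ⟨x, hx, hxr, -⟩ := exists_mem_of_lowerBoundary_lt hlt
  exact h x hx hxr

lemma upperBoundary_flat (hr : r < m) (h : lowerBoundary I r = upperBoundary I r) :
    upperBoundary I r = 0 ∨ (0 < r ∧ upperBoundary I (r - 1) = upperBoundary I r) := by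
  have hempty (x) (hx : x ∈ I) : (x.1.rev : ℕ) ≠ r := fun hxr => by
    have := lowerBoundary_le_of_mem hx
    have := lt_upperBoundary_of_mem hx hxr.le
    rw [hxr] at *
    omega
  rcases Nat.eq_zero_or_pos r with rfl | hr0
  · left
    rw [upperBoundary, if_pos hr]
    exact Nat.eq_zero_of_le_zero <| Finset.sup_le fun x hx => by
      have := hempty x hx
      split_ifs <;> omega
  · right
    refine ⟨hr0, ?_⟩
    rw [upperBoundary, upperBoundary, if_pos hr, if_pos (by omega)]
    exact Finset.sup_congr rfl fun x hx => by
      have := hempty x hx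
      split_ifs <;> omega

variable (hI : IsIntervalClosed I)
include hI

lemma monotone_lowerBoundary : Monotone (lowerBoundary I) := by
  intro r r' hrr'
  by_contra! hlt
  obtain ⟨x, hx, hxr, hxj⟩ := exists_mem_of_lowerBoundary_lt
    (hlt.trans_le (lowerBoundary_le_upperBoundary.trans (monotone_upperBoundary hrr')))
  have hr : r < m := hrr'.trans_lt (hxr ▸ x.1.rev.isLt)
  obtain ⟨y, hy, hyr, hyj⟩ :=
    exists_mem_of_lt_upperBoundary hr (hlt.trans_le lowerBoundary_le_upperBoundary)
  have hz : (Fin.rev ⟨r, hr⟩, x.2) ∈ I := by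
    refine hI.mem_of_le_of_le hx hy ⟨Fin.le_rev_iff.2 ?_, le_rfl⟩ ⟨Fin.rev_le_iff.2 hyr, ?_⟩
    · exact Fin.le_def.2 (show r ≤ (x.1.rev : ℕ) by omega)
    · exact Fin.le_def.2 (show (x.2 : ℕ) ≤ y.2 by omega)
  have : lowerBoundary I r ≤ x.2 := by simpa using lowerBoundary_le_of_mem hz
  omega

lemma cellsBetween_boundaries : cellsBetween m n (upperBoundary I) (lowerBoundary I) = I := by
  ext x
  rw [mem_cellsBetween]
  refine ⟨fun ⟨hlow, hup⟩ => ?_,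
    fun hx => ⟨lowerBoundary_le_of_mem hx, lt_upperBoundary_of_mem hx le_rfl⟩⟩
  obtain ⟨y, hy, hyr, hyj⟩ := exists_mem_of_lowerBoundary_lt (hlow.trans_lt hup)
  obtain ⟨z, hz, hzr, hzj⟩ := exists_mem_of_lt_upperBoundary x.1.rev.isLt hup
  have hyx : y.1 = x.1 := Fin.rev_injective (Fin.ext hyr)
  exact hI.mem_of_le_of_le hy hz ⟨hyx.le, Fin.le_def.2 (by omega)⟩ ⟨Fin.rev_le_rev.1 hzr, hzj⟩

lemma isBoundaryPair_boundaries : IsBoundaryPair m n (upperBoundary I) (lowerBoundary I) where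
  monotone_upper := monotone_upperBoundary
  monotone_lower := monotone_lowerBoundary hI
  lower_le_upper _ := lowerBoundary_le_upperBoundary
  upper_eq _ hr := if_neg (not_lt.2 hr)
  lower_eq r hr := by
    rw [lowerBoundary_eq_upperBoundary fun x _ hxr => by have := x.1.rev.isLt; omega]
    exact if_neg (not_lt.2 hr)
  upper_flat _ hr h := upperBoundary_flat hr h

end Boundary

section BoundaryCellsBetween

variable {α β : ℕ → ℕ} (h : IsBoundaryPair m n α β)
include h

lemma le_upperBoundary_cellsBetween (r : ℕ) : α r ≤ upperBoundary (cellsBetween m n α β) r := by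
  induction r using Nat.strong_induction_on with
  | _ r ih =>
  by_cases hr : r < m
  swap
  · simp [upperBoundary, hr, h.upper_eq r (not_lt.1 hr)]
  have hαn := h.upper_le r
  rcases (h.lower_le_upper r).lt_or_eq with hlt | heq
  · have := lt_upperBoundary_of_mem (r := r) ((mk_mem_cellsBetween (α := α) (β := β) hr
      (show α r - 1 < n by omega)).2 ⟨by omega, by omega⟩) (by simp)
    dsimp only at this
    omega
  · rcases h.upper_flat r hr heq with h0 | ⟨h0, hprev⟩
    · omega
    · calc α r = α (r - 1) := hprev.symm
        _ ≤ upperBoundary _ (r - 1) := ih _ (by omega)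
        _ ≤ _ := monotone_upperBoundary (by omega)

lemma upperBoundary_cellsBetween : upperBoundary (cellsBetween m n α β) = α := by
  funext r
  refine le_antisymm ?_ (le_upperBoundary_cellsBetween h r)
  by_cases hr : r < m
  · rw [upperBoundary, if_pos hr]
    refine Finset.sup_le fun x hx => ?_
    split_ifs with hxr
    · exact (mem_cellsBetween.1 hx).2.trans_le (h.monotone_upper hxr)
    · exact zero_le _
  · simp [upperBoundary, hr, h.upper_eq r (not_lt.1 hr)]

lemma lowerBoundary_cellsBetween : lowerBoundary (cellsBetween m n α β) = β := by
  funext r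
  refine le_antisymm (Nat.sInf_le ?_) (le_csInf ⟨_, Or.inl rfl⟩ ?_)
  · rw [upperBoundary_cellsBetween h]
    rcases (h.lower_le_upper r).lt_or_eq with hlt | heq
    · have hr : r < m := by
        by_contra! hr
        have := h.upper_eq r hr
        have := h.lower_eq r hr
        omega
      have := h.upper_le r
      exact Or.inr ⟨_, (mk_mem_cellsBetween (α := α) (β := β) hr (show β r < n by omega)).2
        ⟨le_rfl, hlt⟩, by simp, rfl⟩
    · exact Or.inl heq
  · rintro j (rfl | ⟨x, hx, hxr, rfl⟩)
    · rw [upperBoundary_cellsBetween h]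
      exact h.lower_le_upper r
    · exact hxr ▸ (mem_cellsBetween.1 hx).1

end BoundaryCellsBetween

noncomputable def intervalClosedEquivBoundaryPair (m n : ℕ) :
    {I : Finset (Fin m × Fin n) // IsIntervalClosed I} ≃
    {αβ : (ℕ → ℕ) × (ℕ → ℕ) // IsBoundaryPair m n αβ.1 αβ.2} where
  toFun I := ⟨(upperBoundary I.1, lowerBoundary I.1), isBoundaryPair_boundaries I.2⟩
  invFun αβ := ⟨cellsBetween m n αβ.1.1 αβ.1.2,
    isIntervalClosed_cellsBetween αβ.2.monotone_upper αβ.2.monotone_lower⟩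
  left_inv I := Subtype.ext (cellsBetween_boundaries I.2)
  right_inv αβ :=
    Subtype.ext (Prod.ext (upperBoundary_cellsBetween αβ.2) (lowerBoundary_cellsBetween αβ.2))

end IntervalClosed

/-- The interval-closed sets of `[m] × [n]` are in bijection with bicolored Motzkin
paths with `#u + #h₁ = m`, `#d + #h₂ = n`, and no `h₂` on the x-axis immediately
followed by an `h₁`. -/
theorem ics_equiv_bicolored_motzkin (m n : ℕ) :
    Nonempty ({I : Finset (Fin m × Fin n) // IsIntervalClosed I} ≃
      {M : List BMStep // IsBMPath M ∧ NoH2ThenH1 M ∧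
        M.count BMStep.u + M.count BMStep.h1 = m ∧
        M.count BMStep.d + M.count BMStep.h2 = n}) :=
  ⟨(intervalClosedEquivBoundaryPair m n).trans (bmPathEquivBoundaryPair m n).symm⟩
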